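/- arXiv:1804.02878 — 2 statements merged into one kernel-verified Lean document; each statement's English description precedes it below -/
import Mathlib

section
/- Let K_dc ∈ ℝ^{2×2} be symmetric positive definite, L_dc ∈ ℝ^{2×1}, and α > 0, ν > 0 be such that the observer LMI holds. Then every differentiable function e : ℝ → ℝ² satisfying e'(t) = (A_dc − K_dc⁻¹ L_dc C_dc) e(t) for all t ≥ 0 obeys the exponential bound ‖e(t)‖ ≤ √(λ_max(K_dc)/λ_min(K_dc)) · e^{−α t} · ‖e(0)‖ for all t ≥ 0, where λ_min(K_dc) and λ_max(K_dc) denote the smallest and largest eigenvalues of K_dc. -/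
/-!
`V(e) = eᵀ K e` is a quadratic Lyapunov function for the error dynamics `e' = A_cl e`,
`A_cl = A - K⁻¹ L C`. Because `K (K⁻¹ L C) = L C`, the upper-left block of the LMI says exactly
`A_clᵀ K + K A_cl + 2α K + Cᵀ C ≺ 0`, so `V' ≤ -2α V` along solutions and Grönwall gives
`V(e t) ≤ e^{-2αt} V(e 0)`. Sandwiching `V` between `λ_min ‖e‖²` and `λ_max ‖e‖²` and taking
square roots gives the bound.
-/

open Matrix

noncomputable section

/-- The fixed matrix `A_dc = [[0,1],[0,0]]`. -/
def Adc : Matrix (Fin 2) (Fin 2) ℝ := !![0, 1; 0, 0]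

/-- The fixed matrix `B_ξ = [0,1]ᵀ`. -/
def Bxi : Matrix (Fin 2) (Fin 1) ℝ := !![0; 1]

/-- The fixed matrix `C_dc = [1,0]`. -/
def Cdc : Matrix (Fin 1) (Fin 2) ℝ := !![1, 0]

/-- A real matrix is negative definite if its negation is positive definite. -/
def NegDef {n : Type*} [Fintype n] (M : Matrix n n ℝ) : Prop := (-M).PosDef

/-- The observer LMI: `[[Φ, K_dc B_ξ],[B_ξᵀ K_dc, −ν]] < 0` with
`Φ = A_dcᵀK_dc + K_dcA_dc − C_dcᵀL_dcᵀ − L_dcC_dc + C_dcᵀC_dc + 2αK_dc`. -/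
def ObserverLMI (Kdc : Matrix (Fin 2) (Fin 2) ℝ) (Ldc : Matrix (Fin 2) (Fin 1) ℝ)
    (α ν : ℝ) : Prop :=
  NegDef (Matrix.fromBlocks
    (Adcᵀ * Kdc + Kdc * Adc - Cdcᵀ * Ldcᵀ - Ldc * Cdc + Cdcᵀ * Cdc + (2 * α) • Kdc)
    (Kdc * Bxi) (Bxiᵀ * Kdc) (-ν • (1 : Matrix (Fin 1) (Fin 1) ℝ)))

open scoped RealInnerProductSpace

theorem le_mul_exp_of_hasDerivAt_le_mul {f f' : ℝ → ℝ} {c : ℝ}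
    (hf : ∀ t ≥ 0, HasDerivAt f (f' t) t) (bound : ∀ t ≥ 0, f' t ≤ c * f t) :
    ∀ t ≥ 0, f t ≤ f 0 * Real.exp (c * t) := by
  intro t ht
  simpa [gronwallBound_ε0] using le_gronwallBound_of_liminf_deriv_right_le (ε := 0)
    (fun s hs ↦ (hf s hs.1).continuousAt.continuousWithinAt)
    (fun s hs _ hr ↦ (hf s hs.1).hasDerivWithinAt.liminf_right_slope_le hr)
    le_rfl (fun s hs ↦ by simpa using bound s hs.1) t ⟨ht, le_rfl⟩

namespace Matrix

variable {n : Type*} [Fintype n] [DecidableEq n]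

theorem inner_toEuclideanLin_self (M : Matrix n n ℝ) (y : EuclideanSpace ℝ n) :
    ⟪y, toEuclideanLin M y⟫ = y.ofLp ⬝ᵥ (M *ᵥ y.ofLp) := by
  rw [EuclideanSpace.inner_eq_star_dotProduct, star_trivial]
  exact dotProduct_comm _ _

theorem PosSemidef.inner_toEuclideanLin_self_nonneg {M : Matrix n n ℝ} (hM : M.PosSemidef)
    (y : EuclideanSpace ℝ n) : 0 ≤ ⟪y, toEuclideanLin M y⟫ := by
  simpa [inner_toEuclideanLin_self] using hM.dotProduct_mulVec_nonneg y.ofLp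

namespace IsHermitian

variable {A : Matrix n n ℝ} (hA : A.IsHermitian) (x : EuclideanSpace ℝ n)

theorem inner_toEuclideanLin_self_eq_sum :
    ⟪x, toEuclideanLin A x⟫ = ∑ i, hA.eigenvalues i * ⟪hA.eigenvectorBasis i, x⟫ ^ 2 := by
  set b := hA.eigenvectorBasis
  have hsymm : (toEuclideanLin A).IsSymmetric := isSymmetric_toEuclideanLin_iff.mpr hA
  have hb : ∀ i, toEuclideanLin A (b i) = hA.eigenvalues i • b i := fun i ↦
    WithLp.ofLp_injective 2 (hA.mulVec_eigenvectorBasis i)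
  rw [← b.sum_inner_mul_inner]
  refine Finset.sum_congr rfl fun i _ ↦ ?_
  rw [← hsymm, hb, real_inner_smul_left, real_inner_comm x]
  ring

theorem iInf_eigenvalues_mul_norm_sq_le :
    (⨅ i, hA.eigenvalues i) * ‖x‖ ^ 2 ≤ ⟪x, toEuclideanLin A x⟫ := by
  rw [hA.inner_toEuclideanLin_self_eq_sum, ← hA.eigenvectorBasis.sum_sq_inner_right,
    Finset.mul_sum]
  exact Finset.sum_le_sum fun i _ ↦ mul_le_mul_of_nonneg_right
    (ciInf_le (Set.finite_range _).bddBelow i) (sq_nonneg _)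

theorem inner_toEuclideanLin_self_le_iSup_eigenvalues_mul_norm_sq :
    ⟪x, toEuclideanLin A x⟫ ≤ (⨆ i, hA.eigenvalues i) * ‖x‖ ^ 2 := by
  rw [hA.inner_toEuclideanLin_self_eq_sum, ← hA.eigenvectorBasis.sum_sq_inner_right,
    Finset.mul_sum]
  exact Finset.sum_le_sum fun i _ ↦ mul_le_mul_of_nonneg_right
    (le_ciSup (Set.finite_range _).bddAbove i) (sq_nonneg _)

end IsHermitian

end Matrix

section Lyapunov

variable {n : Type*} [Fintype n] [DecidableEq n] {K A : Matrix n n ℝ}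
  {x : ℝ → EuclideanSpace ℝ n}

theorem hasDerivAt_inner_toEuclideanLin_self {t : ℝ}
    (hx : HasDerivAt x (toEuclideanLin A (x t)) t) :
    HasDerivAt (fun s ↦ ⟪x s, toEuclideanLin K (x s)⟫)
      ⟪x t, toEuclideanLin (Aᵀ * K + K * A) (x t)⟫ t := by
  have hKx := (toEuclideanLin K).toContinuousLinearMap.hasFDerivAt.comp_hasDerivAt t hx
  refine (hx.inner ℝ hKx).congr_deriv ?_
  simp only [EuclideanSpace.inner_eq_star_dotProduct, star_trivial, Function.comp_apply,
    LinearMap.coe_toContinuousLinearMap', ofLp_toLpLin, toLin'_apply, add_mulVec, ← mulVec_mulVec]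
  rw [add_dotProduct, mulVec_transpose, ← dotProduct_mulVec, add_comm]

theorem inner_toEuclideanLin_self_le_mul_exp {α : ℝ}
    (hKA : (-(Aᵀ * K + K * A + (2 * α) • K)).PosSemidef)
    (hx : ∀ t ≥ 0, HasDerivAt x (toEuclideanLin A (x t)) t) :
    ∀ t ≥ 0, ⟪x t, toEuclideanLin K (x t)⟫ ≤
      ⟪x 0, toEuclideanLin K (x 0)⟫ * Real.exp (-(2 * α) * t) := by
  refine le_mul_exp_of_hasDerivAt_le_mul
    (fun t ht ↦ hasDerivAt_inner_toEuclideanLin_self (hx t ht)) fun t _ ↦ ?_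
  have := hKA.inner_toEuclideanLin_self_nonneg (x t)
  simp only [map_neg, map_add, map_smul, LinearMap.neg_apply, LinearMap.add_apply,
    LinearMap.smul_apply, inner_neg_right, inner_add_right, real_inner_smul_right] at this ⊢
  linarith

theorem norm_le_mul_exp_of_lyapunov [Nonempty n] (hK : K.PosDef) {α : ℝ}
    (hKA : (-(Aᵀ * K + K * A + (2 * α) • K)).PosSemidef)
    (hx : ∀ t ≥ 0, HasDerivAt x (toEuclideanLin A (x t)) t) :
    ∀ t ≥ 0, ‖x t‖ ≤ √((⨆ i, hK.isHermitian.eigenvalues i) / ⨅ i, hK.isHermitian.eigenvalues i) *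
      Real.exp (-α * t) * ‖x 0‖ := by
  intro t ht
  set lmin := ⨅ i, hK.isHermitian.eigenvalues i
  set lmax := ⨆ i, hK.isHermitian.eigenvalues i
  have hmin : 0 < lmin := by
    obtain ⟨i, hi⟩ := exists_eq_ciInf_of_finite (f := hK.isHermitian.eigenvalues)
    exact (hK.eigenvalues_pos i).trans_eq hi
  have hsq : lmin * ‖x t‖ ^ 2 ≤ lmin * (lmax / lmin * (Real.exp (-α * t) * ‖x 0‖) ^ 2) := by
    calc lmin * ‖x t‖ ^ 2 ≤ ⟪x t, toEuclideanLin K (x t)⟫ :=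
          hK.isHermitian.iInf_eigenvalues_mul_norm_sq_le _
      _ ≤ ⟪x 0, toEuclideanLin K (x 0)⟫ * Real.exp (-(2 * α) * t) :=
          inner_toEuclideanLin_self_le_mul_exp hKA hx t ht
      _ ≤ lmax * ‖x 0‖ ^ 2 * Real.exp (-(2 * α) * t) := by
          gcongr; exact hK.isHermitian.inner_toEuclideanLin_self_le_iSup_eigenvalues_mul_norm_sq _
      _ = lmin * (lmax / lmin * (Real.exp (-α * t) * ‖x 0‖) ^ 2) := by
          rw [mul_pow, ← Real.exp_nat_mul]; field_simp; ring_nf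
  have hmax : 0 < lmax := (hK.eigenvalues_pos (Classical.arbitrary n)).trans_le
    (le_ciSup (Set.finite_range _).bddAbove _)
  rw [← pow_le_pow_iff_left₀ (norm_nonneg _) (by positivity) two_ne_zero, mul_assoc, mul_pow,
    Real.sq_sqrt (by positivity)]
  exact le_of_mul_le_mul_left hsq hmin

end Lyapunov

theorem NegDef.toBlocks₁₁ {m n : Type*} [Fintype m] [Fintype n]
    {M : Matrix (m ⊕ n) (m ⊕ n) ℝ} (h : NegDef M) : NegDef M.toBlocks₁₁ :=
  h.submatrix Sum.inl_injective

theorem lyapunov_sub_inv_mul_mul_eq {n m : Type*} [Fintype n] [DecidableEq n] [Fintype m]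
    {K : Matrix n n ℝ} (hK : K.IsHermitian) (hdet : IsUnit K.det) (A : Matrix n n ℝ)
    (L : Matrix n m ℝ) (C : Matrix m n ℝ) :
    (A - K⁻¹ * L * C)ᵀ * K + K * (A - K⁻¹ * L * C) = Aᵀ * K + K * A - Cᵀ * Lᵀ - L * C := by
  have hKt : Kᵀ = K := isHermitian_iff_isSymm.mp hK
  rw [transpose_sub, transpose_mul, transpose_mul, transpose_nonsing_inv, hKt, sub_mul, mul_sub,
    Matrix.mul_assoc, Matrix.mul_assoc, nonsing_inv_mul _ hdet, Matrix.mul_one,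
    ← Matrix.mul_assoc, ← Matrix.mul_assoc, mul_nonsing_inv _ hdet, Matrix.one_mul]
  abel

theorem ObserverLMI.negDef_lyapunov {K : Matrix (Fin 2) (Fin 2) ℝ} (hK : K.PosDef)
    {L : Matrix (Fin 2) (Fin 1) ℝ} {α ν : ℝ} (h : ObserverLMI K L α ν) :
    NegDef ((Adc - K⁻¹ * L * Cdc)ᵀ * K + K * (Adc - K⁻¹ * L * Cdc) + (2 * α) • K) := by
  have hΦ := NegDef.toBlocks₁₁ h
  rw [toBlocks_fromBlocks₁₁] at hΦ
  rw [NegDef, lyapunov_sub_inv_mul_mul_eq hK.isHermitian (isUnit_iff_ne_zero.2 hK.det_pos.ne')]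
  convert hΦ.add_posSemidef (posSemidef_conjTranspose_mul_self Cdc) using 1
  simp only [conjTranspose_eq_transpose_of_trivial]
  abel

theorem observer_error_exponential_bound_general
    (Kdc : Matrix (Fin 2) (Fin 2) ℝ) (hK : Kdc.PosDef)
    (Ldc : Matrix (Fin 2) (Fin 1) ℝ) (α ν : ℝ)
    (hLMI : ObserverLMI Kdc Ldc α ν)
    (e : ℝ → EuclideanSpace ℝ (Fin 2))
    (hdiff : Differentiable ℝ e)
    (hode : ∀ t ≥ (0:ℝ), deriv e t = (Adc - Kdc⁻¹ * Ldc * Cdc) *ᵥ (e t)) :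
    ∀ t ≥ (0:ℝ), ‖e t‖ ≤
      Real.sqrt ((⨆ i, hK.isHermitian.eigenvalues i) / (⨅ i, hK.isHermitian.eigenvalues i)) *
        Real.exp (-α * t) * ‖e 0‖ := by
  refine norm_le_mul_exp_of_lyapunov hK (hLMI.negDef_lyapunov hK).posSemidef fun t ht ↦ ?_
  refine (hdiff t).hasDerivAt.congr_deriv (WithLp.ofLp_injective 2 ?_)
  rw [hode t ht]
  rfl

/-- under the observer LMI, every differentiable solution of the
error dynamics obeys the exponential bound
`‖e(t)‖ ≤ √(λ_max(K_dc)/λ_min(K_dc)) e^{−αt} ‖e(0)‖` for `t ≥ 0`. -/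
theorem observer_error_exponential_bound
    (Kdc : Matrix (Fin 2) (Fin 2) ℝ) (hK : Kdc.PosDef)
    (Ldc : Matrix (Fin 2) (Fin 1) ℝ) (α ν : ℝ) (hα : 0 < α) (hν : 0 < ν)
    (hLMI : ObserverLMI Kdc Ldc α ν)
    (e : ℝ → EuclideanSpace ℝ (Fin 2))
    (hdiff : Differentiable ℝ e)
    (hode : ∀ t ≥ (0:ℝ), deriv e t = (Adc - Kdc⁻¹ * Ldc * Cdc) *ᵥ (e t)) :
    ∀ t ≥ (0:ℝ), ‖e t‖ ≤
      Real.sqrt ((⨆ i, hK.isHermitian.eigenvalues i) / (⨅ i, hK.isHermitian.eigenvalues i)) *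
        Real.exp (-α * t) * ‖e 0‖ :=
  observer_error_exponential_bound_general Kdc hK Ldc α ν hLMI e hdiff hode
end
end

section
/- Let K_dc ∈ ℝ^{2×2} be symmetric positive definite, L_dc ∈ ℝ^{2×1}, and α > 0, ν > 0 be such that the observer LMI holds. Let g : ℝ → ℝ be continuous and let e : ℝ → ℝ² be differentiable with e'(t) = (A_dc − K_dc⁻¹ L_dc C_dc) e(t) + B_ξ g(t) for all t ≥ 0. Then for every t ≥ 0 at which (e(t), g(t)) ≠ (0, 0), the pointwise dissipation inequality d/dt (e(t)ᵀ K_dc e(t)) + 2α e(t)ᵀ K_dc e(t) + (C_dc e(t))² − ν g(t)² < 0 holds. -/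
/-! Along the error dynamics `d/dt (eᵀ K e) = 2 eᵀ K ė`, and since `K (K⁻¹ L C) = L C` the inverse
drops out: `2 eᵀ K ė + 2α eᵀ K e + (C e)² − ν g²` is exactly the quadratic form of the LMI block
matrix evaluated at the stacked vector `(e, g)`, hence negative as soon as `(e, g) ≠ 0`. -/

open Matrix

noncomputable section

section Derivatives

variable {m n : Type*} [Fintype m] [Fintype n] {u v : ℝ → n → ℝ} {u' v' : n → ℝ} {t : ℝ}

theorem HasDerivAt.dotProduct (hu : HasDerivAt u u' t) (hv : HasDerivAt v v' t) :
    HasDerivAt (fun s => u s ⬝ᵥ v s) (u' ⬝ᵥ v t + u t ⬝ᵥ v') t := by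
  have := HasDerivAt.fun_sum (u := Finset.univ) (A := fun i s => u s i * v s i) fun i _ =>
    (hasDerivAt_pi.1 hu i).mul (hasDerivAt_pi.1 hv i)
  rw [Finset.sum_add_distrib] at this
  exact this

theorem HasDerivAt.mulVec (K : Matrix m n ℝ) (hu : HasDerivAt u u' t) :
    HasDerivAt (fun s => K *ᵥ u s) (K *ᵥ u') t :=
  K.mulVecLin.toContinuousLinearMap.hasFDerivAt.comp_hasDerivAt_of_eq t hu rfl

theorem HasDerivAt.ofLp {e : ℝ → EuclideanSpace ℝ n} {e' : EuclideanSpace ℝ n}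
    (he : HasDerivAt e e' t) : HasDerivAt (fun s => (e s).ofLp) e'.ofLp t :=
  (PiLp.hasFDerivAt_ofLp 2 (e t)).comp_hasDerivAt t he

end Derivatives

section QuadraticForms

variable {l m n : Type*} [Fintype l] [Fintype m] [Fintype n]

theorem Matrix.IsSymm.dotProduct_mulVec_comm {K : Matrix n n ℝ} (hK : K.IsSymm) (x y : n → ℝ) :
    x ⬝ᵥ K *ᵥ y = y ⬝ᵥ K *ᵥ x :=
  calc x ⬝ᵥ K *ᵥ y = x ᵥ* Kᵀ ⬝ᵥ y := by rw [hK.eq, dotProduct_mulVec]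
    _ = y ⬝ᵥ K *ᵥ x := by rw [vecMul_transpose, dotProduct_comm]

theorem HasDerivAt.dotProduct_mulVec_self {K : Matrix n n ℝ} (hK : K.IsSymm) {u : ℝ → n → ℝ}
    {u' : n → ℝ} {t : ℝ} (hu : HasDerivAt u u' t) :
    HasDerivAt (fun s => u s ⬝ᵥ K *ᵥ u s) (2 * (u t ⬝ᵥ K *ᵥ u')) t := by
  convert hu.dotProduct (hu.mulVec K) using 1
  rw [hK.dotProduct_mulVec_comm u', two_mul]

theorem dotProduct_transpose_mul_mulVec (P : Matrix l m ℝ) (Q : Matrix l n ℝ) (x : m → ℝ)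
    (y : n → ℝ) : x ⬝ᵥ (Pᵀ * Q) *ᵥ y = P *ᵥ x ⬝ᵥ Q *ᵥ y := by
  rw [← mulVec_mulVec, dotProduct_mulVec, vecMul_transpose]

theorem sumElim_dotProduct_fromBlocks_mulVec (A : Matrix m m ℝ) (B : Matrix m n ℝ)
    (C : Matrix n m ℝ) (D : Matrix n n ℝ) (x : m → ℝ) (w : n → ℝ) :
    Sum.elim x w ⬝ᵥ fromBlocks A B C D *ᵥ Sum.elim x w
      = x ⬝ᵥ A *ᵥ x + x ⬝ᵥ B *ᵥ w + (w ⬝ᵥ C *ᵥ x + w ⬝ᵥ D *ᵥ w) := by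
  simp only [fromBlocks_mulVec, Sum.elim_comp_inl, Sum.elim_comp_inr, sumElim_dotProduct_sumElim,
    dotProduct_add]

theorem NegDef.dotProduct_mulVec_neg {M : Matrix n n ℝ} (hM : NegDef M) {z : n → ℝ}
    (hz : z ≠ 0) : z ⬝ᵥ M *ᵥ z < 0 := by
  simpa [neg_mulVec] using hM.dotProduct_mulVec_pos hz

end QuadraticForms

section Observer

variable {n m p : Type*} [Fintype n] [Fintype m] [Fintype p] [DecidableEq n] [DecidableEq m]

/-- `ObserverLMI K L α ν` unfolds to `NegDef (observerLMIMatrix Adc Bxi Cdc K L α ν)`. -/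
def observerLMIMatrix (A : Matrix n n ℝ) (B : Matrix n m ℝ) (C : Matrix p n ℝ)
    (K : Matrix n n ℝ) (L : Matrix n p ℝ) (α ν : ℝ) : Matrix (n ⊕ m) (n ⊕ m) ℝ :=
  fromBlocks (Aᵀ * K + K * A - Cᵀ * Lᵀ - L * C + Cᵀ * C + (2 * α) • K) (K * B) (Bᵀ * K)
    (-ν • (1 : Matrix m m ℝ))

variable {A : Matrix n n ℝ} {B : Matrix n m ℝ} {C : Matrix p n ℝ} {K : Matrix n n ℝ}
  {L : Matrix n p ℝ} {α ν : ℝ}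

theorem dissipation_eq_observerLMIMatrix (hK : K.IsSymm) (hK' : IsUnit K.det) (x : n → ℝ)
    (w : m → ℝ) :
    2 * (x ⬝ᵥ K *ᵥ ((A - K⁻¹ * L * C) *ᵥ x + B *ᵥ w)) + 2 * α * (x ⬝ᵥ K *ᵥ x)
        + C *ᵥ x ⬝ᵥ C *ᵥ x - ν * (w ⬝ᵥ w)
      = Sum.elim x w ⬝ᵥ observerLMIMatrix A B C K L α ν *ᵥ Sum.elim x w := by
  have hKA : x ⬝ᵥ (Aᵀ * K) *ᵥ x = x ⬝ᵥ (K * A) *ᵥ x := by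
    rw [dotProduct_transpose_mul_mulVec, ← mulVec_mulVec, hK.dotProduct_mulVec_comm]
  have hLC : x ⬝ᵥ (Cᵀ * Lᵀ) *ᵥ x = x ⬝ᵥ (L * C) *ᵥ x := by
    rw [dotProduct_transpose_mul_mulVec, ← mulVec_mulVec, dotProduct_mulVec, vecMul_transpose,
      dotProduct_comm]
  have hBK : w ⬝ᵥ (Bᵀ * K) *ᵥ x = x ⬝ᵥ (K * B) *ᵥ w := by
    rw [dotProduct_transpose_mul_mulVec, ← mulVec_mulVec, hK.dotProduct_mulVec_comm]
  have hKinv : K *ᵥ (K⁻¹ * L * C) *ᵥ x = (L * C) *ᵥ x := by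
    rw [mulVec_mulVec, Matrix.mul_assoc, mul_nonsing_inv_cancel_left _ _ hK']
  rw [observerLMIMatrix, sumElim_dotProduct_fromBlocks_mulVec]
  simp only [add_mulVec, sub_mulVec, smul_mulVec, one_mulVec, mulVec_add, mulVec_sub,
    dotProduct_add, dotProduct_sub, dotProduct_smul, smul_eq_mul]
  rw [hKA, hLC, hBK, hKinv, dotProduct_transpose_mul_mulVec C C]
  simp only [← mulVec_mulVec]
  ring

theorem observer_dissipation_neg (hK : K.IsSymm) (hK' : IsUnit K.det)
    (hLMI : NegDef (observerLMIMatrix A B C K L α ν)) {x : n → ℝ} {w : m → ℝ}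
    (hxw : x ≠ 0 ∨ w ≠ 0) :
    2 * (x ⬝ᵥ K *ᵥ ((A - K⁻¹ * L * C) *ᵥ x + B *ᵥ w)) + 2 * α * (x ⬝ᵥ K *ᵥ x)
        + C *ᵥ x ⬝ᵥ C *ᵥ x - ν * (w ⬝ᵥ w) < 0 := by
  rw [dissipation_eq_observerLMIMatrix hK hK']
  refine hLMI.dotProduct_mulVec_neg fun hz => ?_
  rw [← Sum.elim_zero_zero, Sum.elim_eq_iff] at hz
  tauto

end Observer

theorem observer_pointwise_dissipation_general
    (Kdc : Matrix (Fin 2) (Fin 2) ℝ) (hK : Kdc.PosDef)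
    (Ldc : Matrix (Fin 2) (Fin 1) ℝ) (α ν : ℝ)
    (hLMI : ObserverLMI Kdc Ldc α ν)
    (g : ℝ → ℝ)
    (e : ℝ → EuclideanSpace ℝ (Fin 2))
    (hdiff : Differentiable ℝ e)
    (hode : ∀ t ≥ (0:ℝ), deriv e t =
      (Adc - Kdc⁻¹ * Ldc * Cdc) *ᵥ (e t) + Bxi *ᵥ (fun _ => g t)) :
    ∀ t ≥ (0:ℝ), ¬(e t = 0 ∧ g t = 0) →
      deriv (fun s => (e s) ⬝ᵥ (Kdc *ᵥ (e s))) t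
        + 2 * α * ((e t) ⬝ᵥ (Kdc *ᵥ (e t)))
        + (e t 0) ^ 2 - ν * (g t) ^ 2 < 0 := by
  intro t ht hne
  have hsymm : Kdc.IsSymm := hK.isHermitian
  have hV := (hdiff t).hasDerivAt.ofLp.dotProduct_mulVec_self hsymm
  have hxw : (e t).ofLp ≠ 0 ∨ (fun _ : Fin 1 => g t) ≠ 0 := by
    simpa only [ne_eq, ← not_and_or, WithLp.ofLp_eq_zero, funext_iff, Pi.zero_apply,
      forall_const] using hne
  have hdiss := observer_dissipation_neg (A := Adc) (B := Bxi) (C := Cdc) hsymm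
    hK.det_pos.ne'.isUnit hLMI hxw
  have hCdc : Cdc *ᵥ (e t).ofLp ⬝ᵥ Cdc *ᵥ (e t).ofLp = e t 0 ^ 2 := by
    simp [Cdc, vecHead, sq]
  have hw : (fun _ : Fin 1 => g t) ⬝ᵥ (fun _ => g t) = g t ^ 2 := by
    simp [dotProduct, sq]
  rw [hCdc, hw] at hdiss
  rw [hV.deriv, hode t ht]
  linarith

/-- under the observer LMI, the driven error dynamics satisfy the
pointwise dissipation inequality
`d/dt (e(t)ᵀK_dc e(t)) + 2α e(t)ᵀK_dc e(t) + (C_dc e(t))² − ν g(t)² < 0`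
at every `t ≥ 0` with `(e(t), g(t)) ≠ (0,0)`. -/
theorem observer_pointwise_dissipation
    (Kdc : Matrix (Fin 2) (Fin 2) ℝ) (hK : Kdc.PosDef)
    (Ldc : Matrix (Fin 2) (Fin 1) ℝ) (α ν : ℝ) (hα : 0 < α) (hν : 0 < ν)
    (hLMI : ObserverLMI Kdc Ldc α ν)
    (g : ℝ → ℝ) (hg : Continuous g)
    (e : ℝ → EuclideanSpace ℝ (Fin 2))
    (hdiff : Differentiable ℝ e)
    (hode : ∀ t ≥ (0:ℝ), deriv e t =
      (Adc - Kdc⁻¹ * Ldc * Cdc) *ᵥ (e t) + Bxi *ᵥ (fun _ => g t)) :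
    ∀ t ≥ (0:ℝ), ¬(e t = 0 ∧ g t = 0) →
      deriv (fun s => (e s) ⬝ᵥ (Kdc *ᵥ (e s))) t
        + 2 * α * ((e t) ⬝ᵥ (Kdc *ᵥ (e t)))
        + (e t 0) ^ 2 - ν * (g t) ^ 2 < 0 :=
  observer_pointwise_dissipation_general Kdc hK Ldc α ν hLMI g e hdiff hode
end
end
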